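/- Let M be a proper ascreen QGCR-null submanifold of an indefinite nearly cosymplectic manifold. Then for all X, Y ∈ Γ(D) and E ∈ Γ(Rad TM): 2ḡ(h(X,Y), E) = ḡ(∇̄_X(φY), φE) + ḡ(∇̄_Y(φX), φE), where h is the second fundamental tensor of M. -/

import Mathlib

/-!
Symmetrizing the nearly cosymplectic condition gives
`∇̄_X(φY) + ∇̄_Y(φX) = φ(∇̄_X Y + ∇̄_Y X)`, so by the compatibility of `φ` with `ḡ` the right-hand
side equals `ḡ(∇̄_X Y + ∇̄_Y X, E) - η(∇̄_X Y + ∇̄_Y X) η(E)`. Since `η` vanishes on `D`, metricity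
turns `η(∇̄_X Y)` into `ḡ(Y, H̄X)`, and the skew-symmetry of `H̄` kills the symmetrized `η`-term.
Finally, by the Gauss formula only the normal part `h(X,Y) = h(Y,X)` of `∇̄_X Y` pairs nontrivially
with the radical.
-/

section

variable {F V : Type*} [CommRing F] [AddCommGroup V] [Module F V]

theorem act_zero_of_metric (g : V →ₗ[F] V →ₗ[F] F) (nabla : V → V → V) (act : V → F → F)
    (hmetric : ∀ X Y Z, act X (g Y Z) = g (nabla X Y) Z + g Y (nabla X Z)) (X : V) :
    act X 0 = 0 := by
  simpa using hmetric X 0 0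

theorem apply_nabla_eq_apply_H_of_apply_eq_zero (g : V →ₗ[F] V →ₗ[F] F) (H : V →ₗ[F] V)
    (ξ : V) (nabla : V → V → V) (act : V → F → F)
    (hmetric : ∀ X Y Z, act X (g Y Z) = g (nabla X Y) Z + g Y (nabla X Z))
    (hH : ∀ X, nabla X ξ = -(H X)) {X Y : V} (hY : g Y ξ = 0) :
    g (nabla X Y) ξ = g Y (H X) := by
  have h := hmetric X Y ξ
  rw [hY, act_zero_of_metric g nabla act hmetric, hH, map_neg] at h
  linear_combination -h

theorem apply_nabla_add_nabla_swap_eq_zero (g : V →ₗ[F] V →ₗ[F] F) (H : V →ₗ[F] V) (ξ : V)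
    (nabla : V → V → V) (act : V → F → F) (hgsymm : ∀ X Y, g X Y = g Y X)
    (hmetric : ∀ X Y Z, act X (g Y Z) = g (nabla X Y) Z + g Y (nabla X Z))
    (hH : ∀ X, nabla X ξ = -(H X)) (hHskew : ∀ X Y, g (H X) Y = - g X (H Y))
    {X Y : V} (hX : g ξ X = 0) (hY : g ξ Y = 0) :
    g ξ (nabla X Y + nabla Y X) = 0 := by
  have hXY := apply_nabla_eq_apply_H_of_apply_eq_zero g H ξ nabla act hmetric hH
    (X := X) (by rw [hgsymm, hY])
  have hYX := apply_nabla_eq_apply_H_of_apply_eq_zero g H ξ nabla act hmetric hH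
    (X := Y) (by rw [hgsymm, hX])
  rw [hgsymm, map_add, LinearMap.add_apply, hXY, hYX, hgsymm Y, hHskew]
  ring

theorem nabla_phi_add_nabla_phi_swap (φ : V →ₗ[F] V) (nabla : V → V → V)
    (hnearly : ∀ X Y, (nabla X (φ Y) - φ (nabla X Y)) + (nabla Y (φ X) - φ (nabla Y X)) = 0)
    (X Y : V) :
    nabla X (φ Y) + nabla Y (φ X) = φ (nabla X Y + nabla Y X) := by
  rw [map_add, ← sub_eq_zero, ← hnearly X Y]
  abel

theorem apply_nabla_eq_apply_h_of_forall_apply_eq_zero (g : V →ₗ[F] V →ₗ[F] F)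
    (nabla nablaM h : V → V → V) (TM : Submodule F V) (hgsymm : ∀ X Y, g X Y = g Y X)
    (hGauss : ∀ X ∈ TM, ∀ Y ∈ TM, nabla X Y = nablaM X Y + h X Y)
    (hMtang : ∀ X ∈ TM, ∀ Y ∈ TM, nablaM X Y ∈ TM)
    {X Y E : V} (hX : X ∈ TM) (hY : Y ∈ TM) (hE : ∀ Z ∈ TM, g E Z = 0) :
    g (nabla X Y) E = g (h X Y) E := by
  rw [hGauss X hX Y hY, map_add, LinearMap.add_apply, hgsymm (nablaM X Y),
    hE _ (hMtang X hX Y hY), zero_add]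

end

theorem ascreen_QGCR_second_fundamental_identity_general
    {F V : Type*} [CommRing F] [AddCommGroup V] [Module F V]
    (g : V →ₗ[F] V →ₗ[F] F) (φ H : V →ₗ[F] V) (ξ : V) (η : V →ₗ[F] F)
    (nabla nablaM : V → V → V) (h : V → V → V) (act : V → F → F)
    (TM D Rad : Submodule F V)
    (hgsymm : ∀ X Y, g X Y = g Y X)
    (hcompat : ∀ X Y, g (φ X) (φ Y) = g X Y - η X * η Y)
    (hηg : ∀ X, η X = g ξ X)
    (hmetric : ∀ X Y Z, act X (g Y Z) = g (nabla X Y) Z + g Y (nabla X Z))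
    (hnearly : ∀ X Y, (nabla X (φ Y) - φ (nabla X Y)) + (nabla Y (φ X) - φ (nabla Y X)) = 0)
    (hH : ∀ X, nabla X ξ = -(H X))
    (hHskew : ∀ X Y, g (H X) Y = - g X (H Y))
    -- Gauss formula and symmetry of `h` on `TM`
    (hGauss : ∀ X ∈ TM, ∀ Y ∈ TM, nabla X Y = nablaM X Y + h X Y)
    (hMtang : ∀ X ∈ TM, ∀ Y ∈ TM, nablaM X Y ∈ TM)
    (hhsymm : ∀ X ∈ TM, ∀ Y ∈ TM, h X Y = h Y X)
    -- `D ⊆ TM`, the radical is orthogonal to `TM`, and `η` vanishes on `D` (ascreen)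
    (hDle : D ≤ TM)
    (hRadortho : ∀ E ∈ Rad, ∀ Z ∈ TM, g E Z = 0)
    (hDortho : ∀ X ∈ D, g ξ X = 0) :
    ∀ X ∈ D, ∀ Y ∈ D, ∀ E ∈ Rad,
      2 * g (h X Y) E = g (nabla X (φ Y)) (φ E) + g (nabla Y (φ X)) (φ E) := by
  intro X hX Y hY E hE
  have hη : η (nabla X Y + nabla Y X) = 0 := by
    rw [hηg]
    exact apply_nabla_add_nabla_swap_eq_zero g H ξ nabla act hgsymm hmetric hH hHskew
      (hDortho X hX) (hDortho Y hY)
  have hGaussE {U W : V} (hU : U ∈ TM) (hW : W ∈ TM) : g (nabla U W) E = g (h U W) E :=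
    apply_nabla_eq_apply_h_of_forall_apply_eq_zero g nabla nablaM h TM hgsymm hGauss hMtang
      hU hW (hRadortho E hE)
  calc 2 * g (h X Y) E = g (nabla X Y + nabla Y X) E := by
        rw [map_add, LinearMap.add_apply, hGaussE (hDle hX) (hDle hY),
          hGaussE (hDle hY) (hDle hX), hhsymm Y (hDle hY) X (hDle hX)]
        ring
    _ = g (φ (nabla X Y + nabla Y X)) (φ E) := by rw [hcompat, hη, zero_mul, sub_zero]
    _ = g (nabla X (φ Y)) (φ E) + g (nabla Y (φ X)) (φ E) := by
        rw [← nabla_phi_add_nabla_phi_swap φ nabla hnearly, map_add, LinearMap.add_apply]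

/-- Let `M` be a proper ascreen QGCR-null submanifold of an indefinite
nearly cosymplectic manifold `(M̄, φ, ξ, η, ḡ)`, with invariant distribution `D` on
which `η` vanishes, Gauss formula `∇̄_X Y = ∇_X Y + h(X,Y)`, radical distribution
`Rad TM` orthogonal to `TM`.  Modelled abstractly with `F` = functions,
`V` = ambient vector fields, `nabla` the ambient Levi-Civita connection (metric),
`H̄` defined by `∇̄_X ξ = -H̄X`, and the nearly cosymplectic condition.  Then for all
`X, Y ∈ Γ(D)` and `E ∈ Γ(Rad TM)`:
`2 ḡ(h(X,Y), E) = ḡ(∇̄_X(φY), φE) + ḡ(∇̄_Y(φX), φE)`. -/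
theorem ascreen_QGCR_second_fundamental_identity
    {F V : Type*} [CommRing F] [AddCommGroup V] [Module F V]
    (g : V →ₗ[F] V →ₗ[F] F) (φ H : V →ₗ[F] V) (ξ : V) (η : V →ₗ[F] F)
    (nabla nablaM : V → V → V) (h : V → V → V) (act : V → F → F)
    (TM D Rad : Submodule F V)
    (hgsymm : ∀ X Y, g X Y = g Y X)
    (hphi2 : ∀ X, φ (φ X) = -X + η X • ξ)
    (hηξ : η ξ = 1)
    (hηφ : ∀ X, η (φ X) = 0)
    (hφξ : φ ξ = 0)
    (hcompat : ∀ X Y, g (φ X) (φ Y) = g X Y - η X * η Y)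
    (hηg : ∀ X, η X = g ξ X)
    (hmetric : ∀ X Y Z, act X (g Y Z) = g (nabla X Y) Z + g Y (nabla X Z))
    (hnearly : ∀ X Y, (nabla X (φ Y) - φ (nabla X Y)) + (nabla Y (φ X) - φ (nabla Y X)) = 0)
    (hH : ∀ X, nabla X ξ = -(H X))
    (hHskew : ∀ X Y, g (H X) Y = - g X (H Y))
    -- Gauss formula and symmetry of `h` on `TM`
    (hGauss : ∀ X ∈ TM, ∀ Y ∈ TM, nabla X Y = nablaM X Y + h X Y)
    (hMtang : ∀ X ∈ TM, ∀ Y ∈ TM, nablaM X Y ∈ TM)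
    (hhsymm : ∀ X ∈ TM, ∀ Y ∈ TM, h X Y = h Y X)
    -- `D ⊆ TM`, the radical is orthogonal to `TM`, and `η` vanishes on `D` (ascreen)
    (hDle : D ≤ TM)
    (hRadortho : ∀ E ∈ Rad, ∀ Z ∈ TM, g E Z = 0)
    (hDortho : ∀ X ∈ D, g ξ X = 0) :
    ∀ X ∈ D, ∀ Y ∈ D, ∀ E ∈ Rad,
      2 * g (h X Y) E = g (nabla X (φ Y)) (φ E) + g (nabla Y (φ X)) (φ E) :=
  ascreen_QGCR_second_fundamental_identity_general g φ H ξ η nabla nablaM h act TM D Rad hgsymm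
    hcompat hηg hmetric hnearly hH hHskew hGauss hMtang hhsymm hDle hRadortho hDortho
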